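/- Let α = -tanh(β/4) and set z = x̂·t̂ ∈ [-1,1]. Then P_j(z) = ((1-α²)/(1 - 2αz + α²))^{2j+2} is a solution of the stationary Fokker-Planck equation 0 = -d/dz [ (α(1+z²) + 2jα(1-z²) - z(1+α²)) P(z) ] + (1/2) d²/dz² [ (1-z²)(1 - 2αz + α²) P(z) ] on (-1,1). -/

import Mathlib

/-! With drift A = α(1 + z²) + 2jα(1 - z²) - z(1 + α²) and diffusion coefficient
B = (1 - z²)(1 - 2αz + α²), one has B' + B·(log P_j)' = 2A, so the probability flux A P_j - ½ (B P_j)'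
vanishes identically on (-1, 1); differentiating it once more gives the stationary equation. -/

noncomputable section

/-- The stationary P-function P_j(z) = ((1-α²)/(1-2αz+α²))^{2j+2}. -/
def Pfun (α j z : ℝ) : ℝ := ((1 - α ^ 2) / (1 - 2 * α * z + α ^ 2)) ^ (2 * j + 2 : ℝ)

theorem one_sub_two_mul_add_sq_pos (α : ℝ) {z : ℝ} (hz : z ∈ Set.Ioo (-1 : ℝ) 1) :
    0 < 1 - 2 * α * z + α ^ 2 := by
  nlinarith [sq_nonneg (α - z), hz.1, hz.2]

theorem hasDerivAt_Pfun (α j : ℝ) {w : ℝ} (hw : 1 - 2 * α * w + α ^ 2 ≠ 0) :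
    HasDerivAt (Pfun α j) (2 * α * (2 * j + 2) / (1 - 2 * α * w + α ^ 2) * Pfun α j w) w := by
  by_cases hc : 1 - α ^ 2 = 0
  · have hconst : Pfun α j = fun _ => (0 : ℝ) ^ (2 * j + 2) := by
      funext v
      simp [Pfun, hc]
    rw [hconst]
    refine (hasDerivAt_const w ((0 : ℝ) ^ (2 * j + 2))).congr_deriv ?_
    rcases eq_or_ne (2 * j + 2) 0 with hp | hp
    · simp [hp]
    · simp [Real.zero_rpow hp]
  · have hbase : HasDerivAt (fun v => (1 - α ^ 2) / (1 - 2 * α * v + α ^ 2))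
        ((1 - α ^ 2) * (2 * α) / (1 - 2 * α * w + α ^ 2) ^ 2) w := by
      have hden := (((hasDerivAt_id' w).const_mul (2 * α)).const_sub 1).add_const (α ^ 2)
      refine ((hasDerivAt_const w (1 - α ^ 2)).div hden hw).congr_deriv ?_
      ring
    have hne : (1 - α ^ 2) / (1 - 2 * α * w + α ^ 2) ≠ 0 := div_ne_zero hc hw
    refine ((Real.hasDerivAt_rpow_const (p := 2 * j + 2) (Or.inl hne)).comp w hbase).congr_deriv ?_
    rw [Real.rpow_sub_one hne]
    unfold Pfun
    field_simp

theorem hasDerivAt_diffusion_mul_Pfun (α j : ℝ) {w : ℝ} (hw : 1 - 2 * α * w + α ^ 2 ≠ 0) :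
    HasDerivAt (fun v => ((1 - v ^ 2) * (1 - 2 * α * v + α ^ 2)) * Pfun α j v)
      (2 * ((α * (1 + w ^ 2) + 2 * j * α * (1 - w ^ 2) - w * (1 + α ^ 2)) * Pfun α j w)) w := by
  have hB : HasDerivAt (fun v : ℝ => (1 - v ^ 2) * (1 - 2 * α * v + α ^ 2))
      (-(2 * w) * (1 - 2 * α * w + α ^ 2) + (1 - w ^ 2) * -(2 * α)) w := by
    refine (((hasDerivAt_pow 2 w).const_sub 1).mul
      ((((hasDerivAt_id' w).const_mul (2 * α)).const_sub 1).add_const (α ^ 2))).congr_deriv ?_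
    ring
  refine (hB.mul (hasDerivAt_Pfun α j hw)).congr_deriv ?_
  have hcancel : (1 - w ^ 2) * (1 - 2 * α * w + α ^ 2) *
      (2 * α * (2 * j + 2) / (1 - 2 * α * w + α ^ 2) * Pfun α j w)
      = (1 - w ^ 2) * (2 * α * (2 * j + 2)) * Pfun α j w := by
    generalize 1 - 2 * α * w + α ^ 2 = D at hw ⊢
    field_simp
  rw [hcancel]
  ring

theorem stmt12_general (j : ℝ) (α : ℝ) :
    ∀ z ∈ Set.Ioo (-1 : ℝ) 1,
    (0 : ℝ) =
      -(deriv (fun w : ℝ =>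
          (α * (1 + w ^ 2) + 2 * j * α * (1 - w ^ 2) - w * (1 + α ^ 2)) * Pfun α j w) z) +
      (1/2) * deriv (deriv (fun w : ℝ =>
          ((1 - w ^ 2) * (1 - 2 * α * w + α ^ 2)) * Pfun α j w)) z := by
  intro z hz
  have hflux : deriv (fun w : ℝ => ((1 - w ^ 2) * (1 - 2 * α * w + α ^ 2)) * Pfun α j w)
      =ᶠ[nhds z] fun w =>
        2 * ((α * (1 + w ^ 2) + 2 * j * α * (1 - w ^ 2) - w * (1 + α ^ 2)) * Pfun α j w) := by
    filter_upwards [isOpen_Ioo.mem_nhds hz] with w hw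
    exact (hasDerivAt_diffusion_mul_Pfun α j (one_sub_two_mul_add_sq_pos α hw).ne').deriv
  have hdiff : DifferentiableAt ℝ
      (fun w => (α * (1 + w ^ 2) + 2 * j * α * (1 - w ^ 2) - w * (1 + α ^ 2)) * Pfun α j w) z :=
    (by fun_prop : DifferentiableAt ℝ
        (fun w : ℝ => α * (1 + w ^ 2) + 2 * j * α * (1 - w ^ 2) - w * (1 + α ^ 2)) z).mul
      (hasDerivAt_Pfun α j (one_sub_two_mul_add_sq_pos α hz).ne').differentiableAt
  rw [hflux.deriv_eq, deriv_const_mul _ hdiff]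
  ring

/-- With α = -tanh(β/4), P_j(z) solves the stationary Fokker-Planck equation
0 = -d/dz[(α(1+z²) + 2jα(1-z²) - z(1+α²)) P] + ½ d²/dz²[(1-z²)(1-2αz+α²) P]
on (-1,1). -/
theorem stmt12 (β j : ℝ) (hj : 0 ≤ j) (α : ℝ) (hα : α = -Real.tanh (β / 4)) :
    ∀ z ∈ Set.Ioo (-1 : ℝ) 1,
    (0 : ℝ) =
      -(deriv (fun w : ℝ =>
          (α * (1 + w ^ 2) + 2 * j * α * (1 - w ^ 2) - w * (1 + α ^ 2)) * Pfun α j w) z) +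
      (1/2) * deriv (deriv (fun w : ℝ =>
          ((1 - w ^ 2) * (1 - 2 * α * w + α ^ 2)) * Pfun α j w)) z :=
  stmt12_general j α

end
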